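/- Let i be an imaginary unit and let f be a slice regular function on D⁴ that is continuous on the closed unit ball of ℍ. For x ∈ D_i set M_x = sup{‖f(y)‖ : y ∈ D_i, ‖y − x‖ ≤ 1 − ‖x‖}. Then for every x ∈ D_i and each choice of sign, (1/2)·(1 − ‖x‖)·‖f′(x) ± i·f′(x)·i‖ + ‖f(x) ± i·f(x)·i‖ ≤ 2·M_x. -/

import Mathlib

noncomputable section

notation "ℍ" => Quaternion ℝ

def IsImaginaryUnit (i : ℍ) : Prop := i.re = 0 ∧ ‖i‖ = 1

def OrthogonalUnits (i j : ℍ) : Prop :=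
  IsImaginaryUnit i ∧ IsImaginaryUnit j ∧ (i * star j).re = 0

def qslice (i : ℍ) : Set ℍ := {z | ∃ x y : ℝ, z = (x : ℍ) + y • i}

def sliceDisc (i : ℍ) : Set ℍ := {z ∈ qslice i | ‖z‖ < 1}

def sliceCircle (i : ℍ) : Set ℍ := {z ∈ qslice i | ‖z‖ = 1}

def unitBall : Set ℍ := {q : ℍ | ‖q‖ < 1}

structure IsMajorant (ω : ℝ → ℝ) : Prop where
  contOn : ContinuousOn ω (Set.Icc 0 2)
  map_zero : ω 0 = 0
  nonneg : ∀ t ∈ Set.Icc (0:ℝ) 2, 0 ≤ ω t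
  mono : MonotoneOn ω (Set.Icc 0 2)
  div_anti : AntitoneOn (fun t => ω t / t) (Set.Ioc 0 2)

def IsRegularMajorant (ω : ℝ → ℝ) : Prop :=
  IsMajorant ω ∧ ∃ C > 0, ∀ x : ℝ, 0 < x → x < 2 →
    (∫ t in (0:ℝ)..x, ω t / t) + x * (∫ t in x..(2:ℝ), ω t / t ^ 2) ≤ C * ω x

def SliceRegularOn (f : ℍ → ℍ) (a : ℕ → ℍ) : Prop :=
  (∀ r : ℝ, 0 ≤ r → r < 1 → Summable (fun n => ‖a n‖ * r ^ n)) ∧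
  (∀ q ∈ unitBall, HasSum (fun n => q ^ n * a n) (f q))

def IsSliceRegular (f : ℍ → ℍ) : Prop := ∃ a : ℕ → ℍ, SliceRegularOn f a

def SliceDeriv (f f' : ℍ → ℍ) (a : ℕ → ℍ) : Prop :=
  SliceRegularOn f a ∧
  (∀ q ∈ unitBall, HasSum (fun n => ((n + 1 : ℕ) : ℝ) • (q ^ n * a (n + 1))) (f' q))

def expI (i : ℍ) (t : ℝ) : ℍ := (Real.cos t : ℍ) + Real.sin t • i

def poisson (i : ℍ) (u : ℍ → ℝ) (q : ℍ) : ℝ :=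
  (1 / (2 * Real.pi)) * ∫ t in (0:ℝ)..(2 * Real.pi),
    u (expI i t) * (1 - ‖q‖ ^ 2) / ‖q - expI i t‖ ^ 2

def comp1 (i : ℍ) (f : ℍ → ℍ) : ℍ → ℍ := fun q => (2⁻¹ : ℝ) • (f q - i * f q * i)

def comp2 (i j : ℍ) (f : ℍ → ℍ) : ℍ → ℍ := fun q => ((2⁻¹ : ℝ) • (f q + i * f q * i)) * j⁻¹

/-!
On the slice `ℂ(i) ≅ ℂ`, the component `g = (f - i f i) / 2` of `f` takes values in `ℂ(i)`, is
holomorphic with power series `∑ zⁿ (aₙ - i aₙ i) / 2`, has derivative `(f' - i f' i) / 2`, and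
satisfies `‖g‖ ≤ ‖f‖`. On the disc of radius `r = 1 - ‖x‖` around `x`, where `‖g‖ ≤ M`, the
Schwarz–Pick inequality `r M ‖g'(x)‖ ≤ M² - ‖g(x)‖²` gives `r/2 ‖g'(x)‖ + ‖g(x)‖ ≤ M`.
For the other sign take a unit `j` anticommuting with `i`: then `(u + i u i) j = u j - i (u j) i`,
and `f j` is slice regular with `‖f j‖ = ‖f‖`, so the first estimate for `f j` is the second one
for `f`.
-/

open Set Metric Complex ComplexConjugate FormalMultilinearSeries

theorem hasFPowerSeriesOnBall_ofScalars_of_hasSum {b : ℕ → ℂ}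
    (hb : ∀ r : ℝ, 0 ≤ r → r < 1 → Summable fun n => ‖b n‖ * r ^ n)
    {G : ℂ → ℂ} (hG : ∀ z : ℂ, ‖z‖ < 1 → HasSum (fun n => z ^ n * b n) (G z)) :
    HasFPowerSeriesOnBall G (ofScalars ℂ b) 0 1 where
  r_le := ENNReal.le_of_forall_nnreal_lt fun r hr =>
    le_radius_of_summable _ <| by
      simpa [ofScalars_norm] using hb r r.2 (by exact_mod_cast hr)
  r_pos := one_pos
  hasSum {y} hy := by
    simpa [ofScalars_apply_eq, mul_comm] using
      hG y (by simpa [← ofReal_norm, enorm_eq_nnnorm] using hy)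

theorem HasFPowerSeriesOnBall.hasSum_deriv_ofScalars {b : ℕ → ℂ} {G : ℂ → ℂ} {R : ENNReal}
    (h : HasFPowerSeriesOnBall G (ofScalars ℂ b) 0 R) {z : ℂ} (hz : z ∈ eball (0 : ℂ) R) :
    HasSum (fun n : ℕ => ((n : ℂ) + 1) * z ^ n * b (n + 1)) (deriv G z) := by
  have h1 := (ContinuousLinearMap.apply ℂ ℂ (1 : ℂ)).hasSum (h.fderiv.hasSum hz)
  simpa [apply_eq_pow_smul_coeff, fderiv_apply_one_eq_deriv, mul_comm, mul_left_comm,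
    mul_assoc] using h1

namespace Complex

theorem sq_norm_sq_sub_conj_mul (M : ℝ) (a w : ℂ) :
    ‖(M : ℂ) ^ 2 - conj a * w‖ ^ 2 =
      ‖(M : ℂ) * (w - a)‖ ^ 2 + (M ^ 2 - ‖a‖ ^ 2) * (M ^ 2 - ‖w‖ ^ 2) := by
  simp only [Complex.sq_norm, normSq_apply, ← ofReal_pow, sub_re, sub_im, mul_re, mul_im,
    conj_re, conj_im, ofReal_re, ofReal_im]
  ring

theorem norm_mul_sub_lt_norm_sq_sub_conj_mul {M : ℝ} {a w : ℂ} (ha : ‖a‖ < M) (hw : ‖w‖ < M) :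
    ‖(M : ℂ) * (w - a)‖ < ‖(M : ℂ) ^ 2 - conj a * w‖ := by
  have hpos : 0 < (M ^ 2 - ‖a‖ ^ 2) * (M ^ 2 - ‖w‖ ^ 2) := by
    have := norm_nonneg a
    have := norm_nonneg w
    apply mul_pos <;> nlinarith
  refine lt_of_pow_lt_pow_left₀ 2 (norm_nonneg _) ?_
  rw [sq_norm_sq_sub_conj_mul M a w]
  linarith

/-- Schwarz–Pick at the centre of a disc: the Schwarz lemma applied to the Möbius transform
`z ↦ M (φ z - φ c) / (M² - conj (φ c) φ z)`, which maps the disc into the unit disc. -/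
theorem mul_norm_deriv_le_of_norm_lt {φ : ℂ → ℂ} {c : ℂ} {r M : ℝ} (hr : 0 < r)
    (hd : DifferentiableOn ℂ φ (ball c r)) (hb : ∀ z ∈ ball c r, ‖φ z‖ < M) :
    r * M * ‖deriv φ c‖ ≤ M ^ 2 - ‖φ c‖ ^ 2 := by
  set a := φ c
  have hc : c ∈ ball c r := mem_ball_self hr
  have ha : ‖a‖ < M := hb c hc
  have hM : 0 < M := (norm_nonneg a).trans_lt ha
  have hδ : 0 < M ^ 2 - ‖a‖ ^ 2 := by nlinarith [norm_nonneg a]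
  have hlt z (hz : z ∈ ball c r) := norm_mul_sub_lt_norm_sq_sub_conj_mul ha (hb z hz)
  have hden z (hz : z ∈ ball c r) : (M : ℂ) ^ 2 - conj a * φ z ≠ 0 :=
    norm_pos_iff.mp ((norm_nonneg _).trans_lt (hlt z hz))
  set F : ℂ → ℂ := fun z => M * (φ z - a) / (M ^ 2 - conj a * φ z)
  have hFd : DifferentiableOn ℂ F (ball c r) :=
    DifferentiableOn.div (by fun_prop) (by fun_prop) hden
  have hF : MapsTo F (ball c r) (closedBall (F c) 1) := by
    intro z hz
    simp only [F, a, sub_self, mul_zero, zero_div, mem_closedBall_zero_iff, norm_div]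
    exact div_le_one_of_le₀ (hlt z hz).le (norm_nonneg _)
  have hφ : HasDerivAt φ (deriv φ c) c :=
    (hd.differentiableAt (isOpen_ball.mem_nhds hc)).hasDerivAt
  have hconj : ((M ^ 2 - ‖a‖ ^ 2 : ℝ) : ℂ) = M ^ 2 - conj a * a := by
    rw [mul_comm, mul_conj']
    push_cast
    ring
  have hF' : HasDerivAt F (M * deriv φ c / (M ^ 2 - ‖a‖ ^ 2 : ℝ)) c := by
    refine (((hφ.sub_const a).const_mul (M : ℂ)).div
      ((hφ.const_mul (conj a)).const_sub ((M : ℂ) ^ 2)) (hden c hc)).congr_deriv ?_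
    simp only [show φ c = a from rfl, sub_self, mul_zero, zero_mul, sub_zero, hconj]
    field_simp [hden c hc]
  have hschwarz := norm_deriv_le_div_of_mapsTo_ball hFd hF hr
  rw [hF'.deriv, norm_div, norm_mul, norm_real, norm_real, Real.norm_of_nonneg hM.le,
    Real.norm_of_nonneg hδ.le, div_le_div_iff₀ hδ hr] at hschwarz
  nlinarith

theorem half_mul_norm_deriv_add_norm_le {φ : ℂ → ℂ} {c : ℂ} {r M : ℝ} (hr : 0 < r)
    (hd : DifferentiableOn ℂ φ (ball c r)) (hb : ∀ z ∈ ball c r, ‖φ z‖ ≤ M) :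
    r / 2 * ‖deriv φ c‖ + ‖φ c‖ ≤ M := by
  refine le_of_forall_pos_le_add fun ε hε => ?_
  have hM : 0 < M + ε := by linarith [(norm_nonneg _).trans (hb c (mem_ball_self hr))]
  have hpick := mul_norm_deriv_le_of_norm_lt hr hd fun z hz =>
    (hb z hz).trans_lt (lt_add_of_pos_right M hε)
  refine le_of_mul_le_mul_left ?_ hM
  nlinarith [sq_nonneg (M + ε - ‖φ c‖)]

end Complex

def sliceProj (i : ℍ) : ℍ →L[ℝ] ℂ :=
  Complex.equivRealProdCLM.symm.toContinuousLinearMap.comp ((innerSL ℝ 1).prod (innerSL ℝ i))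

theorem sliceProj_apply (i u : ℍ) : sliceProj i u = ⟨u.re, (i * star u).re⟩ := by
  simp only [sliceProj, ContinuousLinearMap.comp_apply, ContinuousLinearMap.prod_apply,
    coe_innerSL_apply, Quaternion.inner_def, one_mul, Quaternion.re_star]
  rfl

namespace IsImaginaryUnit

variable {i : ℍ}

theorem star_eq (hi : IsImaginaryUnit i) : star i = -i := Quaternion.star_eq_neg.mpr hi.1

theorem mul_self (hi : IsImaginaryUnit i) : i * i = -1 := by
  have h : i * star i = 1 := by
    rw [Quaternion.self_mul_star, Quaternion.normSq_eq_norm_mul_self, hi.2, mul_one,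
      Quaternion.coe_one]
  rw [hi.star_eq, mul_neg] at h
  exact neg_eq_iff_eq_neg.mp h

/-- A pure quaternion orthogonal to `i` anticommutes with it, and `span {1, i}ᗮ ≠ ⊥` since
`dim ℍ = 4`. -/
theorem exists_norm_eq_one_mul_eq_neg (hi : IsImaginaryUnit i) :
    ∃ j : ℍ, ‖j‖ = 1 ∧ j * i = -(i * j) := by
  set K := Submodule.span ℝ (Set.range ![1, i])
  have hK : Kᗮ ≠ ⊥ := by
    intro h
    have h4 := K.finrank_add_finrank_orthogonal
    rw [h, finrank_bot, Quaternion.finrank_eq_four] at h4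
    have : Module.finrank ℝ K ≤ 2 := finrank_range_le_card (R := ℝ) ![1, i]
    omega
  obtain ⟨w, hwK, hw0⟩ := Submodule.exists_mem_ne_zero_of_ne_bot hK
  have hw_re : w.re = 0 := by
    simpa [Quaternion.inner_def] using
      K.inner_left_of_mem_orthogonal (Submodule.subset_span ⟨0, rfl⟩) hwK
  have hiw : (i * star w).re = 0 := by
    simpa [Quaternion.inner_def] using
      K.inner_right_of_mem_orthogonal (Submodule.subset_span ⟨1, rfl⟩) hwK
  have hwi : w * i = -(i * w) := by
    have h := Quaternion.self_add_star (i * star w)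
    rw [hiw, star_mul, star_star, Quaternion.star_eq_neg.mpr hw_re, hi.star_eq, mul_neg,
      mul_neg, Quaternion.coe_zero, mul_zero, ← neg_add, neg_eq_zero, add_comm] at h
    exact eq_neg_of_add_eq_zero_left h
  refine ⟨‖w‖⁻¹ • w, by simp [norm_smul, hw0], ?_⟩
  rw [smul_mul_assoc, hwi, mul_smul_comm, smul_neg]

def sliceEmb (hi : IsImaginaryUnit i) : ℂ →ₐ[ℝ] ℍ := Complex.liftAux i hi.mul_self

theorem sliceEmb_apply (hi : IsImaginaryUnit i) (z : ℂ) :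
    hi.sliceEmb z = (z.re : ℍ) + z.im • i := rfl

theorem star_sliceEmb (hi : IsImaginaryUnit i) (z : ℂ) :
    star (hi.sliceEmb z) = hi.sliceEmb (conj z) := by
  simp [sliceEmb_apply, hi.star_eq]

theorem norm_sliceEmb (hi : IsImaginaryUnit i) (z : ℂ) : ‖hi.sliceEmb z‖ = ‖z‖ := by
  have h : ((Quaternion.normSq (hi.sliceEmb z) : ℝ) : ℍ) = ((Complex.normSq z : ℝ) : ℍ) := by
    rw [← Quaternion.self_mul_star, star_sliceEmb, ← map_mul, Complex.mul_conj, sliceEmb_apply]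
    simp
  rw [Quaternion.coe_inj, Quaternion.normSq_eq_norm_mul_self, Complex.normSq_eq_norm_sq] at h
  nlinarith [norm_nonneg (hi.sliceEmb z), norm_nonneg z]

theorem sliceEmb_mul_comm (hi : IsImaginaryUnit i) (z : ℂ) :
    hi.sliceEmb z * i = i * hi.sliceEmb z := by
  have h := ((Commute.all z I).map hi.sliceEmb).eq
  rwa [show hi.sliceEmb I = i from Complex.liftAux_apply_I _ _] at h

theorem sliceDisc_eq_image (hi : IsImaginaryUnit i) :
    sliceDisc i = hi.sliceEmb '' ball 0 1 := by
  ext x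
  constructor
  · rintro ⟨⟨u, v, rfl⟩, hx⟩
    refine ⟨⟨u, v⟩, ?_, rfl⟩
    rwa [mem_ball_zero_iff, ← hi.norm_sliceEmb]
  · rintro ⟨z, hz, rfl⟩
    exact ⟨⟨z.re, z.im, rfl⟩, by rwa [hi.norm_sliceEmb, ← mem_ball_zero_iff]⟩

theorem sliceEmb_sliceProj (hi : IsImaginaryUnit i) (u : ℍ) :
    hi.sliceEmb (sliceProj i u) = (2⁻¹ : ℝ) • (u - i * u * i) := by
  have hsq : i.imI ^ 2 + i.imJ ^ 2 + i.imK ^ 2 = 1 := by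
    have h := Quaternion.normSq_eq_norm_mul_self i
    rw [hi.2, Quaternion.normSq_def', hi.1] at h
    linarith
  rw [sliceEmb_apply, sliceProj_apply]
  ext <;> simp only [Quaternion.re_add, Quaternion.imI_add, Quaternion.imJ_add,
    Quaternion.imK_add, Quaternion.re_sub, Quaternion.imI_sub, Quaternion.imJ_sub,
    Quaternion.imK_sub, Quaternion.re_smul, Quaternion.imI_smul, Quaternion.imJ_smul,
    Quaternion.imK_smul, Quaternion.re_coe, Quaternion.imI_coe, Quaternion.imJ_coe,
    Quaternion.imK_coe, Quaternion.re_mul, Quaternion.imI_mul, Quaternion.imJ_mul,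
    Quaternion.imK_mul, Quaternion.re_star, Quaternion.imI_star, Quaternion.imJ_star,
    Quaternion.imK_star, smul_eq_mul, hi.1]
  · linear_combination (-u.re / 2) * hsq
  · linear_combination (u.imI / 2) * hsq
  · linear_combination (u.imJ / 2) * hsq
  · linear_combination (u.imK / 2) * hsq

theorem sliceProj_sliceEmb_mul (hi : IsImaginaryUnit i) (z : ℂ) (u : ℍ) :
    sliceProj i (hi.sliceEmb z * u) = z * sliceProj i u := by
  apply hi.sliceEmb.toRingHom.injective
  change hi.sliceEmb _ = hi.sliceEmb _
  rw [map_mul hi.sliceEmb z, sliceEmb_sliceProj, sliceEmb_sliceProj, mul_smul_comm, mul_sub,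
    ← mul_assoc i, ← hi.sliceEmb_mul_comm, mul_assoc, mul_assoc, mul_assoc]

theorem norm_sliceProj (hi : IsImaginaryUnit i) (u : ℍ) :
    ‖sliceProj i u‖ = 2⁻¹ * ‖u - i * u * i‖ := by
  rw [← hi.norm_sliceEmb, sliceEmb_sliceProj, norm_smul, Real.norm_of_nonneg (by norm_num)]

theorem norm_sliceProj_le (hi : IsImaginaryUnit i) (u : ℍ) : ‖sliceProj i u‖ ≤ ‖u‖ := by
  have h : ‖i * u * i‖ = ‖u‖ := by rw [norm_mul, norm_mul, hi.2, one_mul, mul_one]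
  rw [hi.norm_sliceProj]
  linarith [norm_sub_le u (i * u * i)]

end IsImaginaryUnit

theorem sub_conj_mul_of_mul_eq_neg {i j : ℍ} (hj : j * i = -(i * j)) (u : ℍ) :
    u * j - i * (u * j) * i = (u + i * u * i) * j := by
  have h : i * (u * j) * i = -(i * u * i * j) := by
    rw [mul_assoc, mul_assoc u, hj]
    noncomm_ring
  rw [h]
  noncomm_ring

def sliceNormsNear (i : ℍ) (f : ℍ → ℍ) (x : ℍ) : Set ℝ :=
  {r : ℝ | ∃ y ∈ sliceDisc i, ‖y - x‖ ≤ 1 - ‖x‖ ∧ r = ‖f y‖}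

theorem bddAbove_sliceNormsNear {f : ℍ → ℍ} (hf : ContinuousOn f (closedBall 0 1)) (i x : ℍ) :
    BddAbove (sliceNormsNear i f x) := by
  obtain ⟨C, hC⟩ := (isCompact_closedBall (0 : ℍ) 1).exists_bound_of_continuousOn hf
  refine ⟨C, ?_⟩
  rintro r ⟨y, hy, -, rfl⟩
  exact hC y (mem_closedBall_zero_iff.mpr hy.2.le)

theorem sliceNormsNear_mul_right {j : ℍ} (hj : ‖j‖ = 1) (i : ℍ) (f : ℍ → ℍ) (x : ℍ) :
    sliceNormsNear i (fun q => f q * j) x = sliceNormsNear i f x := by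
  simp only [sliceNormsNear, norm_mul, hj, mul_one]

section SliceRegular

variable {i : ℍ} {f f' : ℍ → ℍ} {a : ℕ → ℍ}

theorem SliceDeriv.mul_right (hf : SliceDeriv f f' a) (c : ℍ) :
    SliceDeriv (fun q => f q * c) (fun q => f' q * c) (fun n => a n * c) := by
  refine ⟨⟨fun r hr0 hr1 => ?_, fun q hq => ?_⟩, fun q hq => ?_⟩
  · refine ((hf.1.1 r hr0 hr1).mul_right ‖c‖).of_nonneg_of_le (fun n => by positivity)
      fun n => ?_
    rw [mul_right_comm]
    gcongr
    exact norm_mul_le _ _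
  · simpa only [mul_assoc] using (hf.1.2 q hq).mul_right c
  · simpa only [mul_assoc, smul_mul_assoc] using (hf.2 q hq).mul_right c

theorem SliceRegularOn.hasFPowerSeriesOnBall_sliceProj (hf : SliceRegularOn f a)
    (hi : IsImaginaryUnit i) :
    HasFPowerSeriesOnBall (fun z => sliceProj i (f (hi.sliceEmb z)))
      (ofScalars ℂ fun n => sliceProj i (a n)) 0 1 := by
  refine hasFPowerSeriesOnBall_ofScalars_of_hasSum (fun r hr0 hr1 => ?_) fun z hz => ?_
  · refine (hf.1 r hr0 hr1).of_nonneg_of_le (fun n => by positivity) fun n => ?_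
    gcongr
    exact hi.norm_sliceProj_le _
  · have h := (sliceProj i).hasSum
      (hf.2 (hi.sliceEmb z) (by simpa [unitBall, hi.norm_sliceEmb] using hz))
    simpa only [← map_pow, hi.sliceProj_sliceEmb_mul] using h

theorem SliceDeriv.hasSum_sliceProj_deriv (hf : SliceDeriv f f' a) (hi : IsImaginaryUnit i)
    {z : ℂ} (hz : ‖z‖ < 1) :
    HasSum (fun n : ℕ => ((n : ℂ) + 1) * z ^ n * sliceProj i (a (n + 1)))
      (sliceProj i (f' (hi.sliceEmb z))) := by
  have h := (sliceProj i).hasSum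
    (hf.2 (hi.sliceEmb z) (by simpa [unitBall, hi.norm_sliceEmb] using hz))
  simpa only [map_smul, ← map_pow, hi.sliceProj_sliceEmb_mul, Complex.real_smul, mul_assoc,
    Nat.cast_succ, Complex.ofReal_add, Complex.ofReal_natCast, Complex.ofReal_one] using h

theorem SliceDeriv.half_mul_norm_deriv_add_norm_le (hi : IsImaginaryUnit i)
    (hf : SliceDeriv f f' a) {x : ℍ} (hx : x ∈ sliceDisc i)
    (hbdd : BddAbove (sliceNormsNear i f x)) :
    (1 / 2 : ℝ) * (1 - ‖x‖) * ‖f' x - i * f' x * i‖ + ‖f x - i * f x * i‖ ≤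
      2 * sSup (sliceNormsNear i f x) := by
  rw [hi.sliceDisc_eq_image] at hx
  obtain ⟨z₀, hz₀, rfl⟩ := hx
  rw [mem_ball_zero_iff] at hz₀
  set g : ℂ → ℂ := fun z => sliceProj i (f (hi.sliceEmb z))
  have hg := hf.1.hasFPowerSeriesOnBall_sliceProj hi
  have hderiv : deriv g z₀ = sliceProj i (f' (hi.sliceEmb z₀)) :=
    (hg.hasSum_deriv_ofScalars (by simpa [← ofReal_norm] using hz₀)).unique
      (hf.hasSum_sliceProj_deriv hi hz₀)
  have hsub : ball z₀ (1 - ‖z₀‖) ⊆ ball 0 1 := ball_subset_ball' (by simp)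
  have hbound : ∀ z ∈ ball z₀ (1 - ‖z₀‖), ‖g z‖ ≤ sSup (sliceNormsNear i f (hi.sliceEmb z₀)) := by
    intro z hz
    refine (hi.norm_sliceProj_le _).trans (le_csSup hbdd ⟨_, ?_, ?_, rfl⟩)
    · exact hi.sliceDisc_eq_image ▸ mem_image_of_mem _ (hsub hz)
    · rw [← map_sub, hi.norm_sliceEmb, hi.norm_sliceEmb]
      exact (mem_ball_iff_norm.mp hz).le
  have h := Complex.half_mul_norm_deriv_add_norm_le (by linarith)
    (hg.differentiableOn.mono (by rwa [← ENNReal.ofReal_one, eball_ofReal])) hbound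
  rw [hderiv, hi.norm_sliceProj, hi.norm_sliceProj, ← hi.norm_sliceEmb] at h
  linarith

end SliceRegular

theorem stmt8 (i : ℍ) (hi : IsImaginaryUnit i) (f f' : ℍ → ℍ) (a : ℕ → ℍ)
    (hf : SliceDeriv f f' a) (hcont : ContinuousOn f (Metric.closedBall 0 1)) :
    ∀ x ∈ sliceDisc i,
      (1 / 2 : ℝ) * (1 - ‖x‖) * ‖f' x - i * f' x * i‖ + ‖f x - i * f x * i‖ ≤
        2 * sSup {r : ℝ | ∃ y ∈ sliceDisc i, ‖y - x‖ ≤ 1 - ‖x‖ ∧ r = ‖f y‖} ∧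
      (1 / 2 : ℝ) * (1 - ‖x‖) * ‖f' x + i * f' x * i‖ + ‖f x + i * f x * i‖ ≤
        2 * sSup {r : ℝ | ∃ y ∈ sliceDisc i, ‖y - x‖ ≤ 1 - ‖x‖ ∧ r = ‖f y‖} := by
  intro x hx
  have hbdd := bddAbove_sliceNormsNear hcont i x
  obtain ⟨j, hj, hji⟩ := hi.exists_norm_eq_one_mul_eq_neg
  have hplus := (hf.mul_right j).half_mul_norm_deriv_add_norm_le hi hx
    (by rwa [sliceNormsNear_mul_right hj])
  simp only [sliceNormsNear_mul_right hj, sub_conj_mul_of_mul_eq_neg hji, norm_mul, hj,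
    mul_one] at hplus
  exact ⟨hf.half_mul_norm_deriv_add_norm_le hi hx hbdd, hplus⟩
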